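/- arXiv:1405.7121 — 5 statements merged into one kernel-verified Lean document; each statement's English description precedes it below -/
import Mathlib

section
/- If X is a finite-dimensional real Hilbert space and C₁,…,C_m are nonempty closed convex subsets with C := ⋂ᵢ Cᵢ ≠ ∅, then for each ε > 0 and M > 0 there exists δ > 0 such that every x with ‖x‖ ≤ M satisfying d(x, Cᵢ) ≤ δ for all i = 1,…,m also satisfies d(x, C) ≤ ε. -/
theorem stmt6 {X : Type*} [NormedAddCommGroup X] [InnerProductSpace ℝ X]
    [FiniteDimensional ℝ X]
    (m : ℕ) (C : Fin m → Set X)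
    (hne : ∀ i, (C i).Nonempty) (hcl : ∀ i, IsClosed (C i)) (hcv : ∀ i, Convex ℝ (C i))
    (hC : (⋂ i, C i).Nonempty) :
    ∀ ε > (0 : ℝ), ∀ M > (0 : ℝ), ∃ δ > (0 : ℝ),
      ∀ x : X, ‖x‖ ≤ M → (∀ i, Metric.infDist x (C i) ≤ δ) →
        Metric.infDist x (⋂ i, C i) ≤ ε := by
  intro ε hε M hM
  set S : Set X := ⋂ i, C i with hS
  set K : Set X := {x | ‖x‖ ≤ M ∧ ε ≤ Metric.infDist x S} with hK
  have hKclosed : IsClosed K := by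
    have h1 : IsClosed {x : X | ‖x‖ ≤ M} := isClosed_le (by continuity) continuous_const
    have h2 : IsClosed {x : X | ε ≤ Metric.infDist x S} :=
      isClosed_le continuous_const (Metric.continuous_infDist_pt S)
    exact h1.inter h2
  have hKsub : K ⊆ Metric.closedBall 0 M := by
    intro x hx
    simpa [Metric.mem_closedBall, dist_eq_norm] using hx.1
  have hKcompact : IsCompact K :=
    (isCompact_closedBall (0 : X) M).of_isClosed_subset hKclosed hKsub
  rcases Set.eq_empty_or_nonempty K with hKe | hKne
  · refine ⟨1, one_pos, fun x hx _ => ?_⟩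
    by_contra h
    push_neg at h
    have : x ∈ K := ⟨hx, le_of_lt h⟩
    simp [hKe] at this
  · have hcont : Continuous fun x : X => ∑ i, Metric.infDist x (C i) := by
      exact continuous_finset_sum _ fun i _ => Metric.continuous_infDist_pt (C i)
    obtain ⟨x₀, hx₀K, hx₀min⟩ := hKcompact.exists_isMinOn hKne hcont.continuousOn
    have hx₀pos : 0 < ∑ i, Metric.infDist x₀ (C i) := by
      have hx₀notS : x₀ ∉ S := by
        intro hmem
        have := Metric.infDist_zero_of_mem hmem
        have := hx₀K.2
        linarith
      obtain ⟨i, hi⟩ : ∃ i, x₀ ∉ C i := by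
        by_contra h
        push_neg at h
        exact hx₀notS (Set.mem_iInter.mpr h)
      have hipos : 0 < Metric.infDist x₀ (C i) :=
        ((hcl i).notMem_iff_infDist_pos (hne i)).mp hi
      exact Finset.sum_pos' (fun j _ => Metric.infDist_nonneg) ⟨i, Finset.mem_univ i, hipos⟩
    set δ₀ := ∑ i, Metric.infDist x₀ (C i) with hδ₀
    refine ⟨δ₀ / (2 * (m + 1)), by positivity, fun x hx hdists => ?_⟩
    by_contra h
    push_neg at h
    have hxK : x ∈ K := ⟨hx, le_of_lt h⟩
    have hmin : δ₀ ≤ ∑ i, Metric.infDist x (C i) := hx₀min hxK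
    have hsum : ∑ i, Metric.infDist x (C i) ≤ m * (δ₀ / (2 * (m + 1))) := by
      calc ∑ i, Metric.infDist x (C i) ≤ ∑ _i : Fin m, δ₀ / (2 * (m + 1)) :=
            Finset.sum_le_sum fun i _ => hdists i
        _ = m * (δ₀ / (2 * (m + 1))) := by simp [mul_comm]
    have hlt : (m : ℝ) * (δ₀ / (2 * (m + 1))) < δ₀ := by
      rw [mul_div_assoc']
      rw [div_lt_iff₀ (by positivity)]
      nlinarith [hx₀pos]
    linarith
end

section
/- Let X be a real Hilbert space, φ : X → ℝ convex continuous, C* a nonempty set, r₀ ∈ (0,1], and L̄ ≥ 1 with |φ(x)-φ(y)| ≤ L̄‖x-y‖ for all x ∈ C* and y ∈ B(x, r₀). Let x̄ ∈ C*, Δ ∈ (0, r₀], x ∈ X with φ(x) - φ(x̄) > Δ, and v ∈ ∂φ(x). Then for every z ∈ B(x̄, Δ/(4L̄)), one has ⟨v, z - x⟩ < -(3/4)Δ. -/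
open scoped RealInnerProductSpace

theorem stmt7 {X : Type*} [NormedAddCommGroup X] [InnerProductSpace ℝ X] [CompleteSpace X]
    (φ : X → ℝ) (hconv : ConvexOn ℝ Set.univ φ) (hcont : Continuous φ)
    (Cstar : Set X) (hCstar : Cstar.Nonempty)
    (r₀ L : ℝ) (hr₀ : r₀ ∈ Set.Ioc (0 : ℝ) 1) (hL : 1 ≤ L)
    (hLip : ∀ x ∈ Cstar, ∀ y ∈ Metric.closedBall x r₀, |φ x - φ y| ≤ L * ‖x - y‖)
    (xbar : X) (hxbar : xbar ∈ Cstar)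
    (Δ : ℝ) (hΔ : Δ ∈ Set.Ioc (0 : ℝ) r₀)
    (x : X) (hgap : φ x - φ xbar > Δ)
    (v : X) (hv : ∀ z : X, φ x + ⟪v, z - x⟫ ≤ φ z) :
    ∀ z ∈ Metric.closedBall xbar (Δ / (4 * L)), ⟪v, z - x⟫ < -(3 / 4) * Δ := by
  intro z hz
  obtain ⟨hΔ0, hΔr⟩ := hΔ
  have hL0 : (0 : ℝ) < L := lt_of_lt_of_le one_pos hL
  have hdist : dist z xbar ≤ Δ / (4 * L) := by
    simpa [dist_comm] using hz
  have hrad : Δ / (4 * L) ≤ r₀ := by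
    have : Δ / (4 * L) ≤ Δ / 1 := by
      apply div_le_div_of_nonneg_left hΔ0.le one_pos
      nlinarith
    rw [div_one] at this; exact this.trans hΔr
  have hz' : z ∈ Metric.closedBall xbar r₀ := by
    simp only [Metric.mem_closedBall]
    exact hdist.trans hrad
  have hlip := hLip xbar hxbar z hz'
  have hnorm : ‖xbar - z‖ ≤ Δ / (4 * L) := by
    rw [← dist_eq_norm, dist_comm]
    exact hdist
  have h1 : φ z - φ xbar ≤ L * (Δ / (4 * L)) := by
    have := abs_le.mp hlip
    nlinarith [mul_le_mul_of_nonneg_left hnorm hL0.le]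
  have h2 : L * (Δ / (4 * L)) = Δ / 4 := by
    field_simp
  have h3 := hv z
  nlinarith
end

section
/- Let X be a real Hilbert space, φ : X → ℝ convex continuous, x̄ ∈ X, r₀ ∈ (0,1], L̄ ≥ 1 with |φ(x̄)-φ(y)| ≤ L̄‖x̄-y‖ for all y ∈ B(x̄, r₀). Let Δ ∈ (0, r₀], x ∈ X with φ(x) - φ(x̄) > Δ, and v ∈ ∂φ(x). Then v ≠ 0 and ⟨‖v‖⁻¹ v, x̄ - x⟩ < -Δ/(4L̄). -/
open scoped RealInnerProductSpace

theorem stmt8 {X : Type*} [NormedAddCommGroup X] [InnerProductSpace ℝ X] [CompleteSpace X]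
    (φ : X → ℝ) (hconv : ConvexOn ℝ Set.univ φ) (hcont : Continuous φ)
    (xbar : X)
    (r₀ L : ℝ) (hr₀ : r₀ ∈ Set.Ioc (0 : ℝ) 1) (hL : 1 ≤ L)
    (hLip : ∀ y ∈ Metric.closedBall xbar r₀, |φ xbar - φ y| ≤ L * ‖xbar - y‖)
    (Δ : ℝ) (hΔ : Δ ∈ Set.Ioc (0 : ℝ) r₀)
    (x : X) (hgap : φ x - φ xbar > Δ)
    (v : X) (hv : ∀ z : X, φ x + ⟪v, z - x⟫ ≤ φ z) :
    v ≠ 0 ∧ ⟪‖v‖⁻¹ • v, xbar - x⟫ < -(Δ / (4 * L)) := by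
  have hL0 : (0:ℝ) < L := lt_of_lt_of_le one_pos hL
  have hΔ0 : 0 < Δ := hΔ.1
  set t : ℝ := Δ / (2 * L) with ht
  have ht0 : 0 < t := div_pos hΔ0 (by linarith)
  set u : X := ‖v‖⁻¹ • v with hu
  have hunorm : ‖u‖ ≤ 1 := by
    rw [hu, norm_smul, norm_inv, norm_norm]
    rcases eq_or_ne v 0 with h | h
    · simp [h]
    · rw [inv_mul_cancel₀ (norm_ne_zero_iff.2 h)]
  have htr : t ≤ r₀ := le_trans (by
      rw [ht]
      calc Δ / (2 * L) ≤ Δ / 1 := by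
            apply div_le_div_of_nonneg_left hΔ0.le one_pos (by linarith)
        _ = Δ := div_one Δ) hΔ.2
  set z : X := xbar + t • u with hz
  have hnormzu : ‖xbar - z‖ ≤ t := by
    have : xbar - z = -(t • u) := by rw [hz]; abel
    rw [this, norm_neg, norm_smul, Real.norm_eq_abs, abs_of_pos ht0]
    nlinarith [norm_nonneg u]
  have hzball : z ∈ Metric.closedBall xbar r₀ := by
    rw [Metric.mem_closedBall, dist_comm, dist_eq_norm]
    exact le_trans hnormzu htr
  have hφz : φ z ≤ φ xbar + Δ / 2 := by
    have h1 := hLip z hzball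
    have h2 : L * ‖xbar - z‖ ≤ L * t := by
      exact mul_le_mul_of_nonneg_left hnormzu hL0.le
    have h3 : L * t = Δ / 2 := by rw [ht]; field_simp
    have h4 : φ z - φ xbar ≤ |φ xbar - φ z| := by
      rw [abs_sub_comm]; exact le_abs_self _
    linarith
  have hvu : ⟪v, u⟫ = ‖v‖ := by
    rcases eq_or_ne v 0 with h | h
    · simp [h, hu]
    · rw [hu, real_inner_smul_right, real_inner_self_eq_norm_sq, sq, ← mul_assoc,
        inv_mul_cancel₀ (norm_ne_zero_iff.2 h), one_mul]
  have hinner : ⟪v, z - x⟫ = ⟪v, xbar - x⟫ + t * ‖v‖ := by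
    have : z - x = (xbar - x) + t • u := by rw [hz]; abel
    rw [this, inner_add_right, real_inner_smul_right, hvu]
  have key : ⟪v, xbar - x⟫ < -(Δ / 2) - t * ‖v‖ := by
    have h1 := hv z
    rw [hinner] at h1
    linarith
  have hvne : v ≠ 0 := by
    intro h
    rw [h] at key
    simp at key
    linarith
  have hnv : 0 < ‖v‖ := norm_pos_iff.2 hvne
  refine ⟨hvne, ?_⟩
  rw [real_inner_smul_left]
  have h1 : ‖v‖⁻¹ * ⟪v, xbar - x⟫ < ‖v‖⁻¹ * (-(Δ / 2) - t * ‖v‖) :=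
    mul_lt_mul_of_pos_left key (inv_pos.2 hnv)
  have h2 : ‖v‖⁻¹ * (-(Δ / 2) - t * ‖v‖) ≤ -(Δ / (4 * L)) := by
    have hinv : 0 < ‖v‖⁻¹ := inv_pos.2 hnv
    have h3 : ‖v‖⁻¹ * (t * ‖v‖) = t := by field_simp
    have h4 : ‖v‖⁻¹ * (-(Δ / 2)) ≤ 0 := by nlinarith
    have h5 : Δ / (4 * L) ≤ t := by
      rw [ht]
      rw [div_le_div_iff₀ (by linarith) (by linarith)]
      nlinarith
    nlinarith
  linarith
end

section
/- Under the hypotheses of Lemma 3.2: let X be a real Hilbert space, C₁,…,C_m nonempty closed convex with C := ⋂Cᵢ ≠ ∅, C* ⊆ C nonempty, φ : X → ℝ convex continuous, r₀ ∈ (0,1], L̄ ≥ 1 with |φ(x)-φ(y)| ≤ L̄‖x-y‖ for x ∈ C*, y ∈ B(x,r₀). Let x̄ ∈ C*, Δ ∈ (0, r₀], α ∈ (0,1], x ∈ X with φ(x) - φ(x̄) > Δ, v ∈ ∂φ(x), and (Ω, w) an amalgamator. Then v ≠ 0 and y := P_{Ω,w}(x - α‖v‖⁻¹v) satisfies ‖y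 - x̄‖² ≤ ‖x - x̄‖² - 2α(4L̄)⁻¹Δ + α². -/
open scoped RealInnerProductSpace

theorem stmt10 {X : Type*} [NormedAddCommGroup X] [InnerProductSpace ℝ X] [CompleteSpace X]
    (m : ℕ) (C : Fin m → Set X)
    (hne : ∀ i, (C i).Nonempty) (hcl : ∀ i, IsClosed (C i)) (hcv : ∀ i, Convex ℝ (C i))
    (hC : (⋂ i, C i).Nonempty)
    (P : Fin m → X → X)
    (hPmem : ∀ i x, P i x ∈ C i)
    (hPchar : ∀ i x, ∀ z ∈ C i, ⟪z - P i x, x - P i x⟫ ≤ 0)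
    (Cstar : Set X) (hCs : Cstar.Nonempty) (hCsub : Cstar ⊆ ⋂ i, C i)
    (φ : X → ℝ) (hconv : ConvexOn ℝ Set.univ φ) (hcont : Continuous φ)
    (r₀ L : ℝ) (hr₀ : r₀ ∈ Set.Ioc (0 : ℝ) 1) (hL : 1 ≤ L)
    (hLip : ∀ x ∈ Cstar, ∀ y ∈ Metric.closedBall x r₀, |φ x - φ y| ≤ L * ‖x - y‖)
    (xbar : X) (hxbar : xbar ∈ Cstar)
    (Δ : ℝ) (hΔ : Δ ∈ Set.Ioc (0 : ℝ) r₀)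
    (α : ℝ) (hα : α ∈ Set.Ioc (0 : ℝ) 1)
    (x : X) (hgap : φ x - φ xbar > Δ)
    (v : X) (hv : ∀ z : X, φ x + ⟪v, z - x⟫ ≤ φ z)
    (Ω : Finset (List (Fin m))) (w : List (Fin m) → ℝ)
    (hfit : ∀ i : Fin m, ∃ t ∈ Ω, i ∈ t)
    (hw : ∀ t ∈ Ω, 0 < w t) (hw1 : ∑ t ∈ Ω, w t = 1) :
    v ≠ 0 ∧
      ‖(∑ t ∈ Ω, w t • t.foldl (fun u i => P i u) (x - α • (‖v‖⁻¹ • v))) - xbar‖ ^ 2 ≤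
        ‖x - xbar‖ ^ 2 - 2 * α * (4 * L)⁻¹ * Δ + α ^ 2 := by
  have hL0 : (0:ℝ) < L := lt_of_lt_of_le one_pos hL
  have hΔ0 : 0 < Δ := hΔ.1
  have hα0 : 0 < α := hα.1
  set g : ℝ := ⟪v, x - xbar⟫ with hgdef
  have h2 : ⟪v, xbar - x⟫ = -g := by
    rw [hgdef, ← inner_neg_right]; congr 1; abel
  have hgΔ : Δ < g := by
    have h1 := hv xbar
    rw [h2] at h1
    linarith
  have hv0 : v ≠ 0 := by
    intro h
    rw [hgdef, h, inner_zero_left] at hgΔ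
    linarith
  have hnv : 0 < ‖v‖ := norm_pos_iff.mpr hv0
  set s : ℝ := Δ / (2 * L) with hsdef
  have hs0 : 0 < s := by positivity
  have hsr : s ≤ r₀ := by
    have h1 : s ≤ Δ := by
      rw [hsdef, div_le_iff₀ (by positivity)]
      nlinarith
    linarith [hΔ.2]
  have hnorm1 : ‖s • (‖v‖⁻¹ • v)‖ = s := by
    rw [norm_smul, norm_smul, norm_inv, norm_norm, Real.norm_eq_abs,
      abs_of_pos hs0, inv_mul_cancel₀ (ne_of_gt hnv), mul_one]
  set z : X := xbar + s • (‖v‖⁻¹ • v) with hzdef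
  have hz : z ∈ Metric.closedBall xbar r₀ := by
    rw [Metric.mem_closedBall, dist_eq_norm, hzdef, add_sub_cancel_left, hnorm1]
    exact hsr
  have hLipz := hLip xbar hxbar z hz
  have hflz : φ z ≤ φ xbar + Δ / 2 := by
    have hn2 : ‖xbar - z‖ = s := by
      rw [hzdef, show xbar - (xbar + s • (‖v‖⁻¹ • v)) = -(s • (‖v‖⁻¹ • v)) by abel,
        norm_neg, hnorm1]
    rw [hn2] at hLipz
    have hLs : L * s = Δ / 2 := by
      rw [hsdef]; field_simp
    have := abs_le.mp hLipz
    linarith [this.2]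
  have hinner : ⟪v, z - x⟫ = -g + s * ‖v‖ := by
    rw [hzdef, show xbar + s • (‖v‖⁻¹ • v) - x = (xbar - x) + s • (‖v‖⁻¹ • v) by abel,
      inner_add_right, h2, real_inner_smul_right, real_inner_smul_right,
      real_inner_self_eq_norm_sq]
    have : ‖v‖⁻¹ * ‖v‖ ^ 2 = ‖v‖ := by
      field_simp
    rw [this]
  have hnb : s * ‖v‖ ≤ g - Δ / 2 := by
    have h1 := hv z
    rw [hinner] at h1
    linarith
  have hkey : Δ * ‖v‖ ≤ 4 * L * g := by
    have hsv : Δ * ‖v‖ = 2 * L * (s * ‖v‖) := by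
      rw [hsdef]; field_simp
    nlinarith
  -- projection step
  have hxbarC : ∀ i, xbar ∈ C i := fun i => Set.mem_iInter.mp (hCsub hxbar) i
  have hstep : ∀ (i : Fin m) (a : X), ‖P i a - xbar‖ ≤ ‖a - xbar‖ := by
    intro i a
    have hch := hPchar i a xbar (hxbarC i)
    have hexp : ‖a - xbar‖ ^ 2 = ‖a - P i a‖ ^ 2 + 2 * ⟪a - P i a, P i a - xbar⟫ +
        ‖P i a - xbar‖ ^ 2 := by
      rw [show a - xbar = (a - P i a) + (P i a - xbar) by abel, norm_add_sq_real]
    have hcross : ⟪a - P i a, P i a - xbar⟫ = -⟪xbar - P i a, a - P i a⟫ := by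
      rw [real_inner_comm, ← inner_neg_left]; congr 1; abel
    nlinarith [norm_nonneg (a - P i a), norm_nonneg (a - xbar), norm_nonneg (P i a - xbar),
      sq_nonneg (‖a - P i a‖)]
  have hfold : ∀ (t : List (Fin m)) (a : X),
      ‖t.foldl (fun u i => P i u) a - xbar‖ ≤ ‖a - xbar‖ := by
    intro t
    induction t with
    | nil => intro a; simp
    | cons i t ih =>
      intro a
      simp only [List.foldl_cons]
      exact le_trans (ih (P i a)) (hstep i a)
  set u : X := x - α • (‖v‖⁻¹ • v) with hudef
  have hyle : ‖(∑ t ∈ Ω, w t • t.foldl (fun u i => P i u) u) - xbar‖ ≤ ‖u - xbar‖ := by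
    have h1 : (∑ t ∈ Ω, w t • t.foldl (fun u i => P i u) u) - xbar =
        ∑ t ∈ Ω, w t • (t.foldl (fun u i => P i u) u - xbar) := by
      simp only [smul_sub, Finset.sum_sub_distrib, ← Finset.sum_smul, hw1, one_smul]
    rw [h1]
    calc ‖∑ t ∈ Ω, w t • (t.foldl (fun u i => P i u) u - xbar)‖
        ≤ ∑ t ∈ Ω, ‖w t • (t.foldl (fun u i => P i u) u - xbar)‖ := norm_sum_le _ _
      _ ≤ ∑ t ∈ Ω, w t * ‖u - xbar‖ := by
          apply Finset.sum_le_sum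
          intro t ht
          rw [norm_smul, Real.norm_eq_abs, abs_of_pos (hw t ht)]
          exact mul_le_mul_of_nonneg_left (hfold t u) (le_of_lt (hw t ht))
      _ = ‖u - xbar‖ := by rw [← Finset.sum_mul, hw1, one_mul]
  refine ⟨hv0, ?_⟩
  have hsq : ‖(∑ t ∈ Ω, w t • t.foldl (fun u i => P i u) u) - xbar‖ ^ 2 ≤ ‖u - xbar‖ ^ 2 :=
    pow_le_pow_left₀ (norm_nonneg _) hyle 2
  have hueq : ‖u - xbar‖ ^ 2 = ‖x - xbar‖ ^ 2 - 2 * (α * (‖v‖⁻¹ * g)) + α ^ 2 := by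
    rw [hudef, show x - α • (‖v‖⁻¹ • v) - xbar = (x - xbar) - α • (‖v‖⁻¹ • v) by abel,
      norm_sub_sq_real, real_inner_smul_right, real_inner_smul_right,
      real_inner_comm, ← hgdef]
    have h3 : ‖α • (‖v‖⁻¹ • v)‖ = α := by
      rw [norm_smul, norm_smul, norm_inv, norm_norm, Real.norm_eq_abs,
        abs_of_pos hα0, inv_mul_cancel₀ (ne_of_gt hnv), mul_one]
    rw [h3]
  have hdiv : Δ / (4 * L) ≤ g / ‖v‖ := by
    rw [div_le_div_iff₀ (by positivity) hnv]
    nlinarith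
  have hfin : 2 * α * (4 * L)⁻¹ * Δ ≤ 2 * (α * (‖v‖⁻¹ * g)) := by
    have h4 : 2 * α * (4 * L)⁻¹ * Δ = 2 * α * (Δ / (4 * L)) := by ring
    have h5 : 2 * (α * (‖v‖⁻¹ * g)) = 2 * α * (g / ‖v‖) := by ring
    rw [h4, h5]
    exact mul_le_mul_of_nonneg_left hdiv (by positivity)
  linarith [hsq, hueq ▸ hsq]
end

section
/- Let X be a real Hilbert space, C₁,…,C_m nonempty closed convex sets with C := ⋂Cᵢ ≠ ∅ satisfying bounded regularity, φ : X → ℝ convex continuous with C_min := argmin_C φ nonempty, C* ⊆ C_min nonempty, and suppose the local Lipschitz condition |φ(x)-φ(y)| ≤ L̄‖x-y‖ for x ∈ C*, y ∈ B(x, r₀) with r₀ ∈ (0,1], L̄ ≥ 1. Let {y^k} be generated by the superiorized DSAP algorithm: y^{k,0} = y^k, y^{k,n+1} = y^{k,n} - β_{k,n} s^{k,n}/‖s^{k,n}‖ (with s^{k,n} ∈ ∂φ(y^{k,n}), step 0 if 0 ∈ ∂φ), y^{k+1} = P_{Ω_k,w_k}(y^{k,N_k}), with (Ω_k,w_k)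 ∈ M*, ∑_k ∑_{n=0}^{N_k-1} β_{k,n} < ∞, 0 < β_{k,n} ≤ 1. Then {y^k} converges in norm to some y* ∈ C, and either y* ∈ C_min, or there exist k₀ ∈ ℕ and c₀ ∈ (0,1) such that for every x ∈ C* and every k ≥ k₀, ‖y^{k+1} - x‖² ≤ ‖y^k - x‖² - c₀ ∑_{n=1}^{N_k-1} β_{k,n}. -/
/-!
The inner subgradient steps move `y k` by at most `ε k = ∑ₙ β k n`, a summable sequence, so the
outer iteration is a bounded perturbation of the amalgamated projection method. The amalgamated
operator is nonexpansive towards every point of `C` and, by firm nonexpansiveness of the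
projections along a string, decreases `‖· - x‖²` by at least a fixed multiple of `d(·, Cᵢ)²`.
Hence `(y k)` is quasi-Fejér with respect to `C` and `d(y k, Cᵢ) → 0`; bounded regularity turns
this into `d(y k, C) → 0`, and a quasi-Fejér sequence approaching a closed set converges to a
point of it.

If the limit `y*` is not a minimizer, the gap `φ y* - min_C φ` bounds `⟪s, u - x⟫` from below
and continuity of `φ` bounds `‖s‖` from above for subgradients `s` near `y*`. So once the inner
iterates stay near `y*`, every normalized subgradient step decreases `‖· - x‖²` by a fixed
multiple of its step size.
-/

open scoped RealInnerProductSpace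

def SubgradientSet {X : Type*} [NormedAddCommGroup X] [InnerProductSpace ℝ X]
    (φ : X → ℝ) (x : X) : Set X :=
  {v | ∀ z : X, φ x + ⟪v, z - x⟫ ≤ φ z}

open Metric Filter Topology Finset

theorem exists_tendsto_of_le_add_of_summable {a ε : ℕ → ℝ} (ha : ∀ k, 0 ≤ a k)
    (hε : ∀ k, 0 ≤ ε k) (hs : Summable ε) (h : ∀ k, a (k + 1) ≤ a k + ε k) :
    ∃ A, Tendsto a atTop (𝓝 A) := by
  set b : ℕ → ℝ := fun k => a k - ∑ j ∈ range k, ε j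
  have hb : Antitone b := antitone_nat_of_succ_le fun k => by
    simp only [b, sum_range_succ]
    linarith [h k]
  have hbdd : BddBelow (Set.range b) := ⟨-∑' j, ε j, by
    rintro _ ⟨k, rfl⟩
    linarith [ha k, hs.sum_le_tsum (range k) fun j _ => hε j]⟩
  exact ⟨_, ((tendsto_atTop_ciInf hb hbdd).add hs.hasSum.tendsto_sum_nat).congr fun k => by
    simp [b]⟩

section QuasiFejer

variable {α : Type*} [PseudoMetricSpace α] {y : ℕ → α} {S : Set α} {ε : ℕ → ℝ}

theorem dist_le_add_sum_Ico_of_le_add {z : α} (h : ∀ k, dist (y (k + 1)) z ≤ dist (y k) z + ε k)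
    {K n : ℕ} (hKn : K ≤ n) : dist (y n) z ≤ dist (y K) z + ∑ j ∈ Ico K n, ε j := by
  induction n, hKn using Nat.le_induction with
  | base => simp
  | succ n hKn ih =>
    rw [sum_Ico_succ_top hKn]
    linarith [h n]

theorem cauchySeq_of_quasiFejer (hS : S.Nonempty) (hε : ∀ k, 0 ≤ ε k) (hs : Summable ε)
    (hF : ∀ z ∈ S, ∀ k, dist (y (k + 1)) z ≤ dist (y k) z + ε k)
    (hd : Tendsto (fun k => infDist (y k) S) atTop (𝓝 0)) : CauchySeq y := by
  have htail : Tendsto (fun K => ∑' j, ε j - ∑ j ∈ range K, ε j) atTop (𝓝 0) := by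
    simpa using (tendsto_const_nhds (x := ∑' j, ε j)).sub hs.hasSum.tendsto_sum_nat
  rw [Metric.cauchySeq_iff']
  intro e he
  obtain ⟨K, hK⟩ := eventually_atTop.1 <|
    (hd.eventually (gt_mem_nhds (by positivity : 0 < e / 4))).and
      (htail.eventually (gt_mem_nhds (by positivity : 0 < e / 2)))
  obtain ⟨z, hz, hKz⟩ := (infDist_lt_iff hS).1 (hK K le_rfl).1
  refine ⟨K, fun n hn => ?_⟩
  have hIco : ∑ j ∈ Ico K n, ε j ≤ ∑' j, ε j - ∑ j ∈ range K, ε j := by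
    rw [sum_Ico_eq_sub _ hn]
    linarith [hs.sum_le_tsum (range n) fun j _ => hε j]
  calc dist (y n) (y K) ≤ dist (y n) z + dist (y K) z := dist_triangle_right _ _ _
    _ ≤ 2 * dist (y K) z + ∑ j ∈ Ico K n, ε j := by
        linarith [dist_le_add_sum_Ico_of_le_add (hF z hz) hn]
    _ < e := by linarith [(hK K le_rfl).2]

theorem exists_tendsto_mem_of_quasiFejer [CompleteSpace α] (hcl : IsClosed S) (hS : S.Nonempty)
    (hε : ∀ k, 0 ≤ ε k) (hs : Summable ε)
    (hF : ∀ z ∈ S, ∀ k, dist (y (k + 1)) z ≤ dist (y k) z + ε k)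
    (hd : Tendsto (fun k => infDist (y k) S) atTop (𝓝 0)) : ∃ y' ∈ S, Tendsto y atTop (𝓝 y') := by
  obtain ⟨y', hy'⟩ := cauchySeq_tendsto_of_complete (cauchySeq_of_quasiFejer hS hε hs hF hd)
  refine ⟨y', (hcl.mem_iff_infDist_zero hS).2 ?_, hy'⟩
  exact tendsto_nhds_unique (((continuous_infDist_pt S).tendsto y').comp hy') hd

end QuasiFejer

def BoundedlyRegular {X ι : Type*} [SeminormedAddCommGroup X] (C : ι → Set X) : Prop :=
  ∀ ε > (0 : ℝ), ∀ M > (0 : ℝ), ∃ δ > (0 : ℝ),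
    ∀ x : X, ‖x‖ ≤ M → (∀ i, infDist x (C i) ≤ δ) → infDist x (⋂ i, C i) ≤ ε

theorem BoundedlyRegular.tendsto_infDist_iInter {X ι : Type*} [SeminormedAddCommGroup X]
    [Finite ι] {C : ι → Set X} (hreg : BoundedlyRegular C) {y : ℕ → X} {M : ℝ}
    (hM : ∀ k, ‖y k‖ ≤ M) (h : ∀ i, Tendsto (fun k => infDist (y k) (C i)) atTop (𝓝 0)) :
    Tendsto (fun k => infDist (y k) (⋂ i, C i)) atTop (𝓝 0) := by
  refine tendsto_order.2 ⟨fun a ha => Eventually.of_forall fun k => ha.trans_le infDist_nonneg,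
    fun e he => ?_⟩
  obtain ⟨δ, hδ, hreg⟩ := hreg (e / 2) (by positivity) (max M 1) (by positivity)
  filter_upwards [eventually_all.2 fun i => (h i).eventually (ge_mem_nhds hδ)] with k hk
  linarith [hreg (y k) ((hM k).trans (le_max_left M 1)) hk]

def stringProj {X ι : Type*} (P : ι → X → X) (t : List ι) (u : X) : X :=
  t.foldl (fun u i => P i u) u

def amalgam {X ι : Type*} [AddCommMonoid X] [Module ℝ X] (P : ι → X → X) (Ω : Finset (List ι))
    (w : List ι → ℝ) (u : X) : X :=
  ∑ t ∈ Ω, w t • stringProj P t u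

section Projections

variable {X ι : Type*} [NormedAddCommGroup X] [InnerProductSpace ℝ X]

theorem sq_norm_sub_add_sq_norm_sub_le {p u x : X} (h : ⟪x - p, u - p⟫ ≤ 0) :
    ‖p - x‖ ^ 2 + ‖u - p‖ ^ 2 ≤ ‖u - x‖ ^ 2 := by
  have hinner : ⟪u - p, p - x⟫ = -⟪x - p, u - p⟫ := by
    rw [← neg_sub x p, inner_neg_right, real_inner_comm]
  have := norm_add_sq_real (u - p) (p - x)
  rw [sub_add_sub_cancel] at this
  linarith

theorem sq_norm_sum_smul_sub_le {κ : Type*} {s : Finset κ} {w : κ → ℝ} (hw0 : ∀ t ∈ s, 0 ≤ w t)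
    (hw1 : ∑ t ∈ s, w t = 1) (z : κ → X) (x : X) :
    ‖∑ t ∈ s, w t • z t - x‖ ^ 2 ≤ ∑ t ∈ s, w t * ‖z t - x‖ ^ 2 := by
  have hsum : ∑ t ∈ s, w t • z t - x = ∑ t ∈ s, w t • (z t - x) := by
    simp only [smul_sub, sum_sub_distrib, ← sum_smul, hw1, one_smul]
  have htri : ‖∑ t ∈ s, w t • z t - x‖ ≤ ∑ t ∈ s, w t * ‖z t - x‖ := by
    rw [hsum]
    refine (norm_sum_le _ _).trans (sum_le_sum fun t ht => ?_)
    rw [norm_smul, Real.norm_of_nonneg (hw0 t ht)]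
  calc ‖∑ t ∈ s, w t • z t - x‖ ^ 2 ≤ (∑ t ∈ s, w t * ‖z t - x‖) ^ 2 := by gcongr
    _ ≤ ∑ t ∈ s, w t * ‖z t - x‖ ^ 2 :=
      Real.pow_arith_mean_le_arith_mean_pow s w _ hw0 hw1 (fun _ _ => norm_nonneg _) 2

variable {C : ι → Set X} {P : ι → X → X}

theorem norm_stringProj_sub_le (hP : ∀ i x, ∀ z ∈ C i, ⟪z - P i x, x - P i x⟫ ≤ 0) {x : X}
    (hx : ∀ i, x ∈ C i) (t : List ι) (u : X) : ‖stringProj P t u - x‖ ≤ ‖u - x‖ := by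
  induction t generalizing u with
  | nil => rfl
  | cons j t ih =>
    have := sq_norm_sub_add_sq_norm_sub_le (hP j u x (hx j))
    refine (ih (P j u)).trans <| (pow_le_pow_iff_left₀ (norm_nonneg _) (norm_nonneg _)
      two_ne_zero).1 ?_
    nlinarith [sq_nonneg ‖u - P j u‖]

-- Each projection moves its argument by at most `√D`, where `D` is the decrease of `‖· - x‖²`.
theorem infDist_le_length_mul_sqrt (hPmem : ∀ i x, P i x ∈ C i)
    (hP : ∀ i x, ∀ z ∈ C i, ⟪z - P i x, x - P i x⟫ ≤ 0) {x : X} (hx : ∀ i, x ∈ C i)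
    {t : List ι} {i : ι} (hi : i ∈ t) (u : X) :
    infDist u (C i) ≤ t.length * √(‖u - x‖ ^ 2 - ‖stringProj P t u - x‖ ^ 2) := by
  induction t generalizing u with
  | nil => simp at hi
  | cons j t ih =>
    rw [show stringProj P (j :: t) u = stringProj P t (P j u) from rfl]
    set D := ‖u - x‖ ^ 2 - ‖stringProj P t (P j u) - x‖ ^ 2
    have hrest : ‖stringProj P t (P j u) - x‖ ^ 2 ≤ ‖P j u - x‖ ^ 2 := by
      gcongr
      exact norm_stringProj_sub_le hP hx t _
    have hfirm := sq_norm_sub_add_sq_norm_sub_le (hP j u x (hx j))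
    have hstep : dist u (P j u) ≤ √D := by
      rw [dist_eq_norm, Real.le_sqrt (norm_nonneg _) (by linarith [sq_nonneg ‖u - P j u‖])]
      linarith
    have hD : 0 ≤ √D := Real.sqrt_nonneg D
    push_cast [List.length_cons]
    rcases List.mem_cons.1 hi with rfl | hi
    · have : (0 : ℝ) ≤ t.length := Nat.cast_nonneg _
      calc infDist u (C i) ≤ dist u (P i u) := infDist_le_dist_of_mem (hPmem i u)
        _ ≤ (t.length + 1) * √D := by nlinarith
    · have hsub : √(‖P j u - x‖ ^ 2 - ‖stringProj P t (P j u) - x‖ ^ 2) ≤ √D :=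
        Real.sqrt_le_sqrt (by linarith [sq_nonneg ‖u - P j u‖])
      calc infDist u (C i) ≤ infDist (P j u) (C i) + dist u (P j u) :=
            infDist_le_infDist_add_dist
        _ ≤ t.length * √D + √D := by
            gcongr
            exact (ih hi _).trans (by gcongr)
        _ = (t.length + 1) * √D := by ring

variable {Ω : Finset (List ι)} {w : List ι → ℝ}

theorem sq_norm_amalgam_sub_le (hw0 : ∀ t ∈ Ω, 0 ≤ w t) (hw1 : ∑ t ∈ Ω, w t = 1) (u x : X) :
    ‖amalgam P Ω w u - x‖ ^ 2 ≤ ∑ t ∈ Ω, w t * ‖stringProj P t u - x‖ ^ 2 :=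
  sq_norm_sum_smul_sub_le hw0 hw1 _ x

theorem norm_amalgam_sub_le (hP : ∀ i x, ∀ z ∈ C i, ⟪z - P i x, x - P i x⟫ ≤ 0) {x : X}
    (hx : ∀ i, x ∈ C i) (hw0 : ∀ t ∈ Ω, 0 ≤ w t) (hw1 : ∑ t ∈ Ω, w t = 1) (u : X) :
    ‖amalgam P Ω w u - x‖ ≤ ‖u - x‖ := by
  refine (pow_le_pow_iff_left₀ (norm_nonneg _) (norm_nonneg _) two_ne_zero).1 ?_
  calc ‖amalgam P Ω w u - x‖ ^ 2 ≤ ∑ t ∈ Ω, w t * ‖stringProj P t u - x‖ ^ 2 :=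
        sq_norm_amalgam_sub_le hw0 hw1 u x
    _ ≤ ∑ t ∈ Ω, w t * ‖u - x‖ ^ 2 := by
        gcongr with t ht
        · exact hw0 t ht
        · exact norm_stringProj_sub_le hP hx t u
    _ = ‖u - x‖ ^ 2 := by rw [← sum_mul, hw1, one_mul]

theorem infDist_sq_le_amalgam_decrease (hPmem : ∀ i x, P i x ∈ C i)
    (hP : ∀ i x, ∀ z ∈ C i, ⟪z - P i x, x - P i x⟫ ≤ 0) {x : X} (hx : ∀ i, x ∈ C i)
    {Δ : ℝ} (hΔ : 0 < Δ) (hw : ∀ t ∈ Ω, Δ ≤ w t) (hw1 : ∑ t ∈ Ω, w t = 1) {q : ℕ}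
    {t : List ι} (ht : t ∈ Ω) (hlen : t.length ≤ q) {i : ι} (hi : i ∈ t) (u : X) :
    infDist u (C i) ^ 2 ≤ q ^ 2 / Δ * (‖u - x‖ ^ 2 - ‖amalgam P Ω w u - x‖ ^ 2) := by
  have hw0 : ∀ t ∈ Ω, 0 ≤ w t := fun t ht => hΔ.le.trans (hw t ht)
  set D : List ι → ℝ := fun t => ‖u - x‖ ^ 2 - ‖stringProj P t u - x‖ ^ 2
  have hD : ∀ t, 0 ≤ D t := fun t => sub_nonneg.2 <| by
    gcongr
    exact norm_stringProj_sub_le hP hx t u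
  have hdrop : Δ * D t ≤ ‖u - x‖ ^ 2 - ‖amalgam P Ω w u - x‖ ^ 2 :=
    calc Δ * D t ≤ w t * D t := by gcongr; exacts [hD t, hw t ht]
      _ ≤ ∑ s ∈ Ω, w s * D s := single_le_sum (fun s hs => mul_nonneg (hw0 s hs) (hD s)) ht
      _ = ‖u - x‖ ^ 2 - ∑ s ∈ Ω, w s * ‖stringProj P s u - x‖ ^ 2 := by
          simp only [D, mul_sub, sum_sub_distrib, ← sum_mul, hw1, one_mul]
      _ ≤ _ := by linarith [sq_norm_amalgam_sub_le (P := P) hw0 hw1 u x]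
  calc infDist u (C i) ^ 2 ≤ (t.length * √(D t)) ^ 2 := by
        gcongr
        · exact infDist_nonneg
        · exact infDist_le_length_mul_sqrt hPmem hP hx hi u
    _ = (t.length : ℝ) ^ 2 * D t := by rw [mul_pow, Real.sq_sqrt (hD t)]
    _ ≤ q ^ 2 * D t := by gcongr; exact hD t
    _ ≤ q ^ 2 / Δ * (‖u - x‖ ^ 2 - ‖amalgam P Ω w u - x‖ ^ 2) := by
        rw [div_mul_eq_mul_div, le_div_iff₀ hΔ, mul_assoc]
        gcongr
        linarith

end Projections

section Perturbed

variable {X ι : Type*} [NormedAddCommGroup X] [InnerProductSpace ℝ X] {C : ι → Set X}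
  {P : ι → X → X} {Ω : ℕ → Finset (List ι)} {w : ℕ → List ι → ℝ} {y z : ℕ → X} {ε : ℕ → ℝ}

theorem tendsto_infDist_of_perturbed_amalgam (hPmem : ∀ i x, P i x ∈ C i)
    (hP : ∀ i x, ∀ z ∈ C i, ⟪z - P i x, x - P i x⟫ ≤ 0) {x : X} (hx : ∀ i, x ∈ C i)
    {Δ : ℝ} (hΔ : 0 < Δ) {q : ℕ} (hfit : ∀ k i, ∃ t ∈ Ω k, i ∈ t)
    (hlen : ∀ k, ∀ t ∈ Ω k, t.length ≤ q) (hw : ∀ k, ∀ t ∈ Ω k, Δ ≤ w k t)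
    (hw1 : ∀ k, ∑ t ∈ Ω k, w k t = 1) (hε : Tendsto ε atTop (𝓝 0))
    (hz : ∀ k, ‖z k - y k‖ ≤ ε k) (hy : ∀ k, y (k + 1) = amalgam P (Ω k) (w k) (z k))
    {A : ℝ} (hA : Tendsto (fun k => ‖y k - x‖) atTop (𝓝 A)) (i : ι) :
    Tendsto (fun k => infDist (y k) (C i)) atTop (𝓝 0) := by
  have hzA : Tendsto (fun k => ‖z k - x‖) atTop (𝓝 A) := by
    refine tendsto_of_tendsto_of_tendsto_of_le_of_le (hA.comp (tendsto_add_atTop_nat 1))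
      (by simpa using hA.add hε) (fun k => ?_) (fun k => ?_)
    · simpa only [Function.comp, hy k] using
        norm_amalgam_sub_le hP hx (fun t ht => hΔ.le.trans (hw k t ht)) (hw1 k) (z k)
    · linarith [norm_sub_le_norm_sub_add_norm_sub (z k) (y k) x, hz k]
  have hdrop : Tendsto (fun k => √(q ^ 2 / Δ * (‖z k - x‖ ^ 2 - ‖y (k + 1) - x‖ ^ 2)) + ε k)
      atTop (𝓝 0) := by
    have := ((hzA.pow 2).sub ((hA.comp (tendsto_add_atTop_nat 1)).pow 2)).const_mul (q ^ 2 / Δ)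
    simpa using (this.sqrt).add hε
  refine squeeze_zero (fun k => infDist_nonneg) (fun k => ?_) hdrop
  obtain ⟨t, ht, hi⟩ := hfit k i
  have hsq := infDist_sq_le_amalgam_decrease hPmem hP hx hΔ (hw k) (hw1 k) ht (hlen k t ht) hi (z k)
  rw [← hy k] at hsq
  calc infDist (y k) (C i) ≤ infDist (z k) (C i) + dist (y k) (z k) := infDist_le_infDist_add_dist
    _ ≤ _ := by
      gcongr
      · exact Real.le_sqrt_of_sq_le hsq
      · rw [dist_comm, dist_eq_norm]; exact hz k

theorem exists_tendsto_of_perturbed_amalgam [CompleteSpace X] [Finite ι]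
    (hcl : ∀ i, IsClosed (C i)) (hC : (⋂ i, C i).Nonempty) (hreg : BoundedlyRegular C)
    (hPmem : ∀ i x, P i x ∈ C i) (hP : ∀ i x, ∀ z ∈ C i, ⟪z - P i x, x - P i x⟫ ≤ 0)
    {Δ : ℝ} (hΔ : 0 < Δ) {q : ℕ} (hfit : ∀ k i, ∃ t ∈ Ω k, i ∈ t)
    (hlen : ∀ k, ∀ t ∈ Ω k, t.length ≤ q) (hw : ∀ k, ∀ t ∈ Ω k, Δ ≤ w k t)
    (hw1 : ∀ k, ∑ t ∈ Ω k, w k t = 1) (hε : ∀ k, 0 ≤ ε k) (hs : Summable ε)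
    (hz : ∀ k, ‖z k - y k‖ ≤ ε k) (hy : ∀ k, y (k + 1) = amalgam P (Ω k) (w k) (z k)) :
    ∃ y' ∈ ⋂ i, C i, Tendsto y atTop (𝓝 y') := by
  have hF : ∀ x ∈ ⋂ i, C i, ∀ k, dist (y (k + 1)) x ≤ dist (y k) x + ε k := by
    intro x hx k
    simp only [dist_eq_norm, hy k]
    calc ‖amalgam P (Ω k) (w k) (z k) - x‖ ≤ ‖z k - x‖ :=
          norm_amalgam_sub_le hP (Set.mem_iInter.1 hx) (fun t ht => hΔ.le.trans (hw k t ht))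
            (hw1 k) (z k)
      _ ≤ ‖y k - x‖ + ε k := by linarith [norm_sub_le_norm_sub_add_norm_sub (z k) (y k) x, hz k]
  obtain ⟨x, hx⟩ := hC
  obtain ⟨A, hA⟩ := exists_tendsto_of_le_add_of_summable (fun _ => dist_nonneg) hε hs (hF x hx)
  simp only [dist_eq_norm] at hA
  obtain ⟨M, hM⟩ := hA.bddAbove_range
  have hCi := tendsto_infDist_of_perturbed_amalgam hPmem hP (Set.mem_iInter.1 hx) hΔ hfit hlen hw
    hw1 hs.tendsto_atTop_zero hz hy hA
  have hbdd : ∀ k, ‖y k‖ ≤ M + ‖x‖ := fun k =>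
    (norm_le_norm_sub_add (y k) x).trans (by gcongr; exact hM ⟨k, rfl⟩)
  exact exists_tendsto_mem_of_quasiFejer (isClosed_iInter hcl) ⟨x, hx⟩ hε hs hF
    (hreg.tendsto_infDist_iInter hbdd hCi)

end Perturbed

section Superiorization

variable {X : Type*} [NormedAddCommGroup X] [InnerProductSpace ℝ X] {φ : X → ℝ}

theorem mul_norm_le_of_mem_subgradientSet {u s : X} (hs : s ∈ SubgradientSet φ u) {r c : ℝ}
    (hr : 0 ≤ r) (hc : ∀ z ∈ closedBall u r, φ z ≤ φ u + c) : r * ‖s‖ ≤ c := by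
  rcases eq_or_ne s 0 with rfl | hs0
  · simpa using hc u (mem_closedBall_self hr)
  have hns : ‖s‖ ≠ 0 := norm_ne_zero_iff.2 hs0
  have hz : u + (r / ‖s‖) • s ∈ closedBall u r := by
    rw [mem_closedBall, dist_eq_norm, add_sub_cancel_left, norm_smul, Real.norm_eq_abs,
      abs_div, abs_norm, abs_of_nonneg hr, div_mul_cancel₀ r hns]
  have := (hs _).trans (hc _ hz)
  rw [add_sub_cancel_left, real_inner_smul_right, real_inner_self_eq_norm_sq] at this
  field_simp at this
  nlinarith

theorem exists_radius_le_inner_normalized_subgradient {y x₀ : X} (hφ : ContinuousAt φ y)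
    (hlt : φ x₀ < φ y) :
    ∃ ρ > 0, ∀ u ∈ closedBall y ρ, ∀ x, φ x ≤ φ x₀ →
      ∀ s ∈ SubgradientSet φ u, ρ ≤ ⟪‖s‖⁻¹ • s, u - x⟫ := by
  set g := φ y - φ x₀
  obtain ⟨δ, hδ, hclose⟩ := Metric.continuousAt_iff.1 hφ (g / 4) (by linarith)
  refine ⟨δ / 3, by positivity, fun u hu x hx s hs => ?_⟩
  have hnear : ∀ z ∈ closedBall y (2 * (δ / 3)), |φ z - φ y| < g / 4 := fun z hz =>
    hclose (by rw [mem_closedBall] at hz; linarith)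
  have hu' := hnear u (closedBall_subset_closedBall (by linarith) hu)
  have hgap : 3 / 4 * g ≤ ⟪s, u - x⟫ := by
    have := hs x
    rw [← neg_sub u x, inner_neg_right] at this
    linarith [(abs_lt.1 hu').1]
  have hnorm : δ / 3 * ‖s‖ ≤ g / 2 := by
    refine mul_norm_le_of_mem_subgradientSet hs (by positivity) fun z hz => ?_
    have := hnear z (closedBall_subset_closedBall' (by rw [mem_closedBall] at hu; linarith) hz)
    linarith [(abs_lt.1 hu').1, (abs_lt.1 this).2]
  have hs0 : 0 < ‖s‖ := by
    rcases eq_or_ne s 0 with rfl | hs0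
    · simp at hgap; linarith
    · exact norm_pos_iff.2 hs0
  rw [real_inner_smul_left, ← div_eq_inv_mul, le_div_iff₀ hs0]
  nlinarith

theorem sq_norm_add_smul_sub_le {u v x : X} {β c : ℝ} (hv : ‖v‖ ≤ 1) (hvx : ⟪v, u - x⟫ ≤ -c)
    (hβ : 0 ≤ β) (hβc : β ≤ c) : ‖u + β • v - x‖ ^ 2 ≤ ‖u - x‖ ^ 2 - c * β := by
  rw [add_sub_right_comm, norm_add_sq_real, real_inner_smul_right, norm_smul,
    Real.norm_of_nonneg hβ, real_inner_comm]
  have hinner : β * ⟪v, u - x⟫ ≤ -(c * β) := by nlinarith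
  have hsq : (β * ‖v‖) ^ 2 ≤ c * β := by
    rw [mul_pow]
    nlinarith [pow_le_one₀ (norm_nonneg v) hv (n := 2)]
  linarith

def IsNormalizedNegSubgradient (φ : X → ℝ) (u v : X) : Prop :=
  ((0 : X) ∉ SubgradientSet φ u ∧ ∃ s ∈ SubgradientSet φ u, v = -(‖s‖⁻¹ • s)) ∨
    ((0 : X) ∈ SubgradientSet φ u ∧ v = 0)

namespace IsNormalizedNegSubgradient

variable {u v : X}

theorem norm_le_one (h : IsNormalizedNegSubgradient φ u v) : ‖v‖ ≤ 1 := by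
  rcases h with ⟨-, s, -, rfl⟩ | ⟨-, rfl⟩
  · rw [norm_neg, norm_smul, norm_inv, norm_norm]
    exact inv_mul_le_one_of_le₀ le_rfl (norm_nonneg s)
  · simp

theorem inner_le (h : IsNormalizedNegSubgradient φ u v) {x : X} {ρ : ℝ} (hρ : 0 < ρ)
    (hdesc : ∀ s ∈ SubgradientSet φ u, ρ ≤ ⟪‖s‖⁻¹ • s, u - x⟫) : ⟪v, u - x⟫ ≤ -ρ := by
  rcases h with ⟨-, s, hs, rfl⟩ | ⟨h0, -⟩
  · rw [inner_neg_left]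
    linarith [hdesc s hs]
  · have := hdesc 0 h0
    simp only [norm_zero, inv_zero, smul_zero, inner_zero_left] at this
    linarith

end IsNormalizedNegSubgradient

variable {u v : ℕ → X} {β : ℕ → ℝ} {N : ℕ}

theorem norm_sub_le_sum_of_steps (hv : ∀ n < N, ‖v n‖ ≤ 1) (hβ : ∀ n < N, 0 ≤ β n)
    (hstep : ∀ n < N, u (n + 1) = u n + β n • v n) {n : ℕ} (hn : n ≤ N) :
    ‖u n - u 0‖ ≤ ∑ j ∈ range N, β j := by
  rw [← dist_eq_norm, dist_comm]
  refine (dist_le_range_sum_dist u n).trans ?_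
  calc ∑ j ∈ range n, dist (u j) (u (j + 1)) ≤ ∑ j ∈ range n, β j := by
        refine sum_le_sum fun j hj => ?_
        have hj : j < N := (mem_range.1 hj).trans_le hn
        rw [hstep j hj, dist_self_add_right, norm_smul, Real.norm_of_nonneg (hβ j hj)]
        exact mul_le_of_le_one_right (hβ j hj) (hv j hj)
    _ ≤ ∑ j ∈ range N, β j :=
        sum_le_sum_of_subset_of_nonneg (range_subset_range.2 hn) fun j hj _ => hβ j (mem_range.1 hj)

theorem sq_norm_sub_le_sub_sum_of_descent {x : X} {ρ c : ℝ} (hρ : 0 < ρ) (hcρ : c ≤ ρ)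
    (hβ : ∀ n < N, 0 ≤ β n ∧ β n ≤ c) (hdir : ∀ n < N, IsNormalizedNegSubgradient φ (u n) (v n))
    (hstep : ∀ n < N, u (n + 1) = u n + β n • v n)
    (hdesc : ∀ n < N, ∀ s ∈ SubgradientSet φ (u n), ρ ≤ ⟪‖s‖⁻¹ • s, u n - x⟫) :
    ‖u N - x‖ ^ 2 ≤ ‖u 0 - x‖ ^ 2 - c * ∑ n ∈ range N, β n := by
  have hdec : ∀ n ∈ range N, c * β n ≤ ‖u n - x‖ ^ 2 - ‖u (n + 1) - x‖ ^ 2 := fun n hn => by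
    have hn := mem_range.1 hn
    have := sq_norm_add_smul_sub_le (hdir n hn).norm_le_one
      (((hdir n hn).inner_le hρ (hdesc n hn)).trans (neg_le_neg hcρ)) (hβ n hn).1 (hβ n hn).2
    rw [hstep n hn]
    linarith
  have := sum_le_sum hdec
  rw [sum_range_sub' (fun n => ‖u n - x‖ ^ 2), ← mul_sum] at this
  linarith

theorem exists_sq_norm_sub_le_sub_sum_of_lt {y : ℕ → X} {yin v : ℕ → ℕ → X}
    {β : ℕ → ℕ → ℝ} {Nk : ℕ → ℕ} {ystar x₀ : X} (hφ : ContinuousAt φ ystar)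
    (hlt : φ x₀ < φ ystar) (hy : Tendsto y atTop (𝓝 ystar)) (hβ0 : ∀ k n, n < Nk k → 0 ≤ β k n)
    (hβ : Tendsto (fun k => ∑ n ∈ range (Nk k), β k n) atTop (𝓝 0))
    (hinner : ∀ k n, n ≤ Nk k → ‖yin k n - y k‖ ≤ ∑ j ∈ range (Nk k), β k j)
    (hinit : ∀ k, yin k 0 = y k)
    (hdir : ∀ k n, n < Nk k → IsNormalizedNegSubgradient φ (yin k n) (v k n))
    (hstep : ∀ k n, n < Nk k → yin k (n + 1) = yin k n + β k n • v k n) :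
    ∃ k₀, ∃ c ∈ Set.Ioo (0 : ℝ) 1, ∀ x, φ x ≤ φ x₀ → ∀ k ≥ k₀,
      ‖yin k (Nk k) - x‖ ^ 2 ≤ ‖y k - x‖ ^ 2 - c * ∑ n ∈ range (Nk k), β k n := by
  obtain ⟨ρ, hρ, hdesc⟩ := exists_radius_le_inner_normalized_subgradient hφ hlt
  obtain ⟨c, hc0, hc1, hcρ⟩ : ∃ c : ℝ, 0 < c ∧ c < 1 ∧ c ≤ ρ / 2 :=
    ⟨min ρ 1 / 2, by positivity, by linarith [min_le_right ρ 1], by linarith [min_le_left ρ 1]⟩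
  obtain ⟨k₀, hk₀⟩ := eventually_atTop.1 <|
    ((tendsto_iff_norm_sub_tendsto_zero.1 hy).eventually (ge_mem_nhds (half_pos hρ))).and
      (hβ.eventually (ge_mem_nhds hc0))
  refine ⟨k₀, c, ⟨hc0, hc1⟩, fun x hx k hk => hinit k ▸ sq_norm_sub_le_sub_sum_of_descent hρ
    (by linarith) (fun n hn => ⟨hβ0 k n hn, ?_⟩) (hdir k) (hstep k) fun n hn => hdesc _ ?_ x hx⟩
  · exact (single_le_sum (fun j hj => hβ0 k j (mem_range.1 hj)) (mem_range.2 hn)).trans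
      (hk₀ k hk).2
  · rw [mem_closedBall, dist_eq_norm]
    linarith [norm_sub_le_norm_sub_add_norm_sub (yin k n) (y k) ystar, hinner k n hn.le, hk₀ k hk]

end Superiorization

theorem stmt12_general {X : Type*} [NormedAddCommGroup X] [InnerProductSpace ℝ X] [CompleteSpace X]
    (m : ℕ) (C : Fin m → Set X)
    (hcl : ∀ i, IsClosed (C i))
    (hC : (⋂ i, C i).Nonempty)
    -- bounded regularity
    (hreg : ∀ ε > (0 : ℝ), ∀ M > (0 : ℝ), ∃ δ > (0 : ℝ),
      ∀ x : X, ‖x‖ ≤ M → (∀ i, Metric.infDist x (C i) ≤ δ) →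
        Metric.infDist x (⋂ i, C i) ≤ ε)
    -- metric projections onto the individual sets
    (P : Fin m → X → X)
    (hPmem : ∀ i x, P i x ∈ C i)
    (hPchar : ∀ i x, ∀ z ∈ C i, ⟪z - P i x, x - P i x⟫ ≤ 0)
    -- objective function, its minimizers over C, and the subset C*
    (φ : X → ℝ) (hcont : Continuous φ)
    (Cstar : Set X) (hCs : Cstar.Nonempty)
    (hCsub : Cstar ⊆ {x ∈ ⋂ i, C i | ∀ y ∈ ⋂ i, C i, φ x ≤ φ y})
    -- the class M* of amalgamators: fit sets, bounded string lengths, weights ≥ Δpar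
    (Δpar : ℝ) (hΔpar : 0 < Δpar ∧ Δpar < 1 / m) (qbar : ℕ)
    (Ωs : ℕ → Finset (List (Fin m))) (ws : ℕ → List (Fin m) → ℝ)
    (hfit : ∀ k, ∀ i : Fin m, ∃ t ∈ Ωs k, i ∈ t)
    (hlen : ∀ k, ∀ t ∈ Ωs k, t.length ≤ qbar)
    (hwge : ∀ k, ∀ t ∈ Ωs k, Δpar ≤ ws k t)
    (hw1 : ∀ k, ∑ t ∈ Ωs k, ws k t = 1)
    -- the superiorized DSAP algorithm
    (Nk : ℕ → ℕ)
    (β : ℕ → ℕ → ℝ) (hβ : ∀ k n, n < Nk k → 0 < β k n ∧ β k n ≤ 1)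
    (hβsum : Summable (fun k => ∑ n ∈ Finset.range (Nk k), β k n))
    (y : ℕ → X) (yin : ℕ → ℕ → X) (v : ℕ → ℕ → X)
    (hinit : ∀ k, yin k 0 = y k)
    (hdir : ∀ k n, n < Nk k →
      (((0 : X) ∉ SubgradientSet φ (yin k n) ∧
          ∃ s ∈ SubgradientSet φ (yin k n), v k n = -(‖s‖⁻¹ • s)) ∨
        ((0 : X) ∈ SubgradientSet φ (yin k n) ∧ v k n = 0)))
    (hstep : ∀ k n, n < Nk k → yin k (n + 1) = yin k n + β k n • v k n)
    (hout : ∀ k, y (k + 1) =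
      ∑ t ∈ Ωs k, ws k t • t.foldl (fun u i => P i u) (yin k (Nk k))) :
    ∃ ystar ∈ ⋂ i, C i,
      Filter.Tendsto y Filter.atTop (nhds ystar) ∧
        (ystar ∈ {x ∈ ⋂ i, C i | ∀ z ∈ ⋂ i, C i, φ x ≤ φ z} ∨
          ∃ k₀ : ℕ, ∃ c₀ ∈ Set.Ioo (0 : ℝ) 1, ∀ x ∈ Cstar, ∀ k ≥ k₀,
            ‖y (k + 1) - x‖ ^ 2 ≤
              ‖y k - x‖ ^ 2 - c₀ * ∑ n ∈ Finset.Ico 1 (Nk k), β k n) := by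
  have hβ0 : ∀ k n, n < Nk k → 0 ≤ β k n := fun k n hn => (hβ k n hn).1.le
  have hinner : ∀ k n, n ≤ Nk k → ‖yin k n - y k‖ ≤ ∑ j ∈ range (Nk k), β k j :=
    fun k n hn => hinit k ▸ norm_sub_le_sum_of_steps
      (fun n hn => IsNormalizedNegSubgradient.norm_le_one (hdir k n hn)) (hβ0 k) (hstep k) hn
  obtain ⟨ystar, hystarC, hyst⟩ := exists_tendsto_of_perturbed_amalgam hcl hC hreg hPmem hPchar
    hΔpar.1 hfit hlen hwge hw1 (fun k => sum_nonneg fun n hn => hβ0 k n (mem_range.1 hn)) hβsum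
    (fun k => hinner k _ le_rfl) hout
  refine ⟨ystar, hystarC, hyst, ?_⟩
  by_cases hmin : ∀ z ∈ ⋂ i, C i, φ ystar ≤ φ z
  · exact Or.inl ⟨hystarC, hmin⟩
  push Not at hmin
  obtain ⟨z, hzC, hz⟩ := hmin
  obtain ⟨xs, hxs⟩ := hCs
  obtain ⟨k₀, c, hc, hdecr⟩ := exists_sq_norm_sub_le_sub_sum_of_lt hcont.continuousAt
    (((hCsub hxs).2 z hzC).trans_lt hz) hyst hβ0 hβsum.tendsto_atTop_zero hinner hinit hdir hstep
  refine Or.inr ⟨k₀, c, hc, fun x hx k hk => ?_⟩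
  have hIco : ∑ n ∈ Ico 1 (Nk k), β k n ≤ ∑ n ∈ range (Nk k), β k n :=
    sum_le_sum_of_subset_of_nonneg (fun n hn => mem_range.2 (mem_Ico.1 hn).2)
      fun n hn _ => hβ0 k n (mem_range.1 hn)
  calc ‖y (k + 1) - x‖ ^ 2 ≤ ‖yin k (Nk k) - x‖ ^ 2 := by
        gcongr
        exact hout k ▸ norm_amalgam_sub_le hPchar (Set.mem_iInter.1 (hCsub hx).1)
          (fun t ht => hΔpar.1.le.trans (hwge k t ht)) (hw1 k) _
    _ ≤ ‖y k - x‖ ^ 2 - c * ∑ n ∈ range (Nk k), β k n :=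
        hdecr x ((hCsub hx).2 xs (hCsub hxs).1) k hk
    _ ≤ ‖y k - x‖ ^ 2 - c * ∑ n ∈ Ico 1 (Nk k), β k n := by
        gcongr
        exact hc.1.le

theorem stmt12 {X : Type*} [NormedAddCommGroup X] [InnerProductSpace ℝ X] [CompleteSpace X]
    (m : ℕ) (hm : 1 ≤ m) (C : Fin m → Set X)
    (hne : ∀ i, (C i).Nonempty) (hcl : ∀ i, IsClosed (C i)) (hcv : ∀ i, Convex ℝ (C i))
    (hC : (⋂ i, C i).Nonempty)
    -- bounded regularity
    (hreg : ∀ ε > (0 : ℝ), ∀ M > (0 : ℝ), ∃ δ > (0 : ℝ),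
      ∀ x : X, ‖x‖ ≤ M → (∀ i, Metric.infDist x (C i) ≤ δ) →
        Metric.infDist x (⋂ i, C i) ≤ ε)
    -- metric projections onto the individual sets
    (P : Fin m → X → X)
    (hPmem : ∀ i x, P i x ∈ C i)
    (hPchar : ∀ i x, ∀ z ∈ C i, ⟪z - P i x, x - P i x⟫ ≤ 0)
    -- objective function, its minimizers over C, and the subset C*
    (φ : X → ℝ) (hconv : ConvexOn ℝ Set.univ φ) (hcont : Continuous φ)
    (hCmin : {x ∈ ⋂ i, C i | ∀ y ∈ ⋂ i, C i, φ x ≤ φ y}.Nonempty)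
    (Cstar : Set X) (hCs : Cstar.Nonempty)
    (hCsub : Cstar ⊆ {x ∈ ⋂ i, C i | ∀ y ∈ ⋂ i, C i, φ x ≤ φ y})
    (r₀ L : ℝ) (hr₀ : r₀ ∈ Set.Ioc (0 : ℝ) 1) (hL : 1 ≤ L)
    (hLip : ∀ x ∈ Cstar, ∀ y ∈ Metric.closedBall x r₀, |φ x - φ y| ≤ L * ‖x - y‖)
    -- the class M* of amalgamators: fit sets, bounded string lengths, weights ≥ Δpar
    (Δpar : ℝ) (hΔpar : 0 < Δpar ∧ Δpar < 1 / m) (qbar : ℕ) (hqbar : m ≤ qbar)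
    (Ωs : ℕ → Finset (List (Fin m))) (ws : ℕ → List (Fin m) → ℝ)
    (hfit : ∀ k, ∀ i : Fin m, ∃ t ∈ Ωs k, i ∈ t)
    (hlen : ∀ k, ∀ t ∈ Ωs k, t.length ≤ qbar)
    (hwge : ∀ k, ∀ t ∈ Ωs k, Δpar ≤ ws k t)
    (hw1 : ∀ k, ∑ t ∈ Ωs k, ws k t = 1)
    -- the superiorized DSAP algorithm
    (N : ℕ) (Nk : ℕ → ℕ) (hNk : ∀ k, 1 ≤ Nk k ∧ Nk k ≤ N)
    (β : ℕ → ℕ → ℝ) (hβ : ∀ k n, n < Nk k → 0 < β k n ∧ β k n ≤ 1)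
    (hβsum : Summable (fun k => ∑ n ∈ Finset.range (Nk k), β k n))
    (y : ℕ → X) (yin : ℕ → ℕ → X) (v : ℕ → ℕ → X)
    (hinit : ∀ k, yin k 0 = y k)
    (hdir : ∀ k n, n < Nk k →
      (((0 : X) ∉ SubgradientSet φ (yin k n) ∧
          ∃ s ∈ SubgradientSet φ (yin k n), v k n = -(‖s‖⁻¹ • s)) ∨
        ((0 : X) ∈ SubgradientSet φ (yin k n) ∧ v k n = 0)))
    (hstep : ∀ k n, n < Nk k → yin k (n + 1) = yin k n + β k n • v k n)
    (hout : ∀ k, y (k + 1) =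
      ∑ t ∈ Ωs k, ws k t • t.foldl (fun u i => P i u) (yin k (Nk k))) :
    ∃ ystar ∈ ⋂ i, C i,
      Filter.Tendsto y Filter.atTop (nhds ystar) ∧
        (ystar ∈ {x ∈ ⋂ i, C i | ∀ z ∈ ⋂ i, C i, φ x ≤ φ z} ∨
          ∃ k₀ : ℕ, ∃ c₀ ∈ Set.Ioo (0 : ℝ) 1, ∀ x ∈ Cstar, ∀ k ≥ k₀,
            ‖y (k + 1) - x‖ ^ 2 ≤
              ‖y k - x‖ ^ 2 - c₀ * ∑ n ∈ Finset.Ico 1 (Nk k), β k n) :=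
  stmt12_general m C hcl hC hreg P hPmem hPchar φ hcont Cstar hCs hCsub Δpar hΔpar qbar Ωs ws hfit
    hlen hwge hw1 Nk β hβ hβsum y yin v hinit hdir hstep hout
end
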